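/- Aliasing with delays: Let H be a b × n Boolean matrix, d ∈ {0,1}^n, and f : {0,1}^n → ℝ with Möbius transform F. Define u : {0,1}^b → ℝ by u(ℓ) = f(¬(Hᵀ(¬ℓ) ∨ d)), where ∨ is componentwise OR and ¬ is componentwise negation. Then the Möbius transform U of u satisfies U(j) = ∑_{k : Hk = j and k ≤ ¬d} F(k). -/

import Mathlib

open Finset

/-- Hamming weight of a Boolean vector. -/
def wt {n : ℕ} (x : Fin n → Bool) : ℕ := (univ.filter fun i => x i = true).card

lemma wt_le {n : ℕ} {x y : Fin n → Bool} (h : ∀ i, x i ≤ y i) : wt x ≤ wt y := by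
  apply card_le_card
  intro i hi
  simp only [mem_filter, mem_univ, true_and] at *
  exact le_antisymm (by simp) (hi ▸ h i)

lemma wt_update_true {n : ℕ} (ℓ : Fin n → Bool) (i : Fin n) (h : ℓ i = false) :
    wt (Function.update ℓ i true) = wt ℓ + 1 := by
  unfold wt
  rw [card_filter, card_filter, ← Finset.sum_erase_add _ _ (mem_univ i),
    ← Finset.sum_erase_add _ _ (mem_univ i)]
  simp only [Function.update_self, h]
  rw [Finset.sum_congr rfl (fun j hj => by
    rw [Function.update_of_ne (mem_erase.1 hj).1])]
  simp

lemma sign_split {n : ℕ} {x y : Fin n → Bool} (h : wt x ≤ wt y) :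
    ((-1 : ℝ)) ^ (wt y - wt x) = (-1) ^ (wt y) * (-1) ^ (wt x) := by
  have h2 : ((-1 : ℝ)) ^ (wt y - wt x) * (-1) ^ (wt x) = (-1) ^ (wt y) := by
    rw [← pow_add, Nat.sub_add_cancel h]
  have h3 : ((-1 : ℝ)) ^ (wt x) * (-1) ^ (wt x) = 1 := by
    rw [← pow_add]
    exact Even.neg_one_pow (Even.add_self _)
  calc ((-1:ℝ)) ^ (wt y - wt x) = (-1)^(wt y - wt x) * ((-1)^(wt x) * (-1)^(wt x)) := by
        rw [h3, mul_one]
    _ = (-1) ^ (wt y) * (-1) ^ (wt x) := by rw [← mul_assoc, h2]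

lemma alt_sum {n : ℕ} (a c : Fin n → Bool) :
    ∑ ℓ ∈ univ.filter (fun ℓ => (∀ i, a i ≤ ℓ i) ∧ ∀ i, ℓ i ≤ c i), ((-1 : ℝ)) ^ (wt ℓ)
      = if a = c then (-1 : ℝ) ^ (wt a) else 0 := by
  by_cases hac : a = c
  · subst hac
    rw [if_pos rfl]
    have : univ.filter (fun ℓ => (∀ i, a i ≤ ℓ i) ∧ ∀ i, ℓ i ≤ a i) = {a} := by
      ext ℓ
      simp only [mem_filter, mem_univ, true_and, mem_singleton]
      constructor
      · rintro ⟨h1, h2⟩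
        funext i
        exact le_antisymm (h2 i) (h1 i)
      · rintro rfl; exact ⟨fun i => le_refl _, fun i => le_refl _⟩
    rw [this, sum_singleton]
  · rw [if_neg hac]
    by_cases hle : ∀ i, a i ≤ c i
    · -- a ≤ c, a ≠ c : involution
      have hex : ∃ i, a i = false ∧ c i = true := by
        by_contra hcon
        push_neg at hcon
        exact hac (funext fun i => by
          have h := hle i
          have h2 := hcon i
          cases ha : a i <;> cases hc : c i <;> simp_all [Bool.le_iff_imp])
      obtain ⟨i, hai, hci⟩ := hex
      have g_mem : ∀ ℓ (hℓ : ℓ ∈ univ.filter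
          (fun ℓ => (∀ i, a i ≤ ℓ i) ∧ ∀ i, ℓ i ≤ c i)),
          Function.update ℓ i (!ℓ i) ∈ univ.filter
          (fun ℓ => (∀ i, a i ≤ ℓ i) ∧ ∀ i, ℓ i ≤ c i) := by
        intro ℓ hℓ
        simp only [mem_filter, mem_univ, true_and] at hℓ ⊢
        obtain ⟨h1, h2⟩ := hℓ
        refine ⟨fun m => ?_, fun m => ?_⟩
        · by_cases hm : m = i
          · subst hm; rw [hai]; exact Bool.false_le _
          · rw [Function.update_of_ne hm]; exact h1 m
        · by_cases hm : m = i
          · subst hm; rw [hci]; exact Bool.le_true _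
          · rw [Function.update_of_ne hm]; exact h2 m
      refine Finset.sum_involution (fun ℓ _ => Function.update ℓ i (!ℓ i)) ?_ ?_ g_mem ?_
      · intro ℓ hℓ
        cases hl : ℓ i with
        | false =>
          simp only [hl, Bool.not_false]
          rw [wt_update_true ℓ i hl, pow_succ]
          ring
        | true =>
          simp only [hl, Bool.not_true]
          have h1 : Function.update (Function.update ℓ i false) i true = ℓ := by
            rw [Function.update_idem, ← hl, Function.update_eq_self]
          have h2 : wt ℓ = wt (Function.update ℓ i false) + 1 := by
            conv_lhs => rw [← h1]
            rw [wt_update_true _ i (Function.update_self i false ℓ)]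
          rw [h2, pow_succ]
          ring
      · intro ℓ hℓ _ hcon
        have : Function.update ℓ i (!ℓ i) i = ℓ i := congrFun hcon i
        rw [Function.update_self] at this
        exact Bool.not_ne_self _ this
      · intro ℓ hℓ
        simp [Function.update_idem, Function.update_self, Bool.not_not, Function.update_eq_self]
    · apply Finset.sum_eq_zero
      intro ℓ hℓ
      simp only [mem_filter, mem_univ, true_and] at hℓ
      exact absurd (fun i => le_trans (hℓ.1 i) (hℓ.2 i)) hle

/-- The forward Möbius transform `F(k) = ∑_{m ≤ k} (-1)^{|k|-|m|} f(m)`. -/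
noncomputable def mobius {n : ℕ} (f : (Fin n → Bool) → ℝ) (k : Fin n → Bool) : ℝ :=
  ∑ m ∈ univ.filter (fun m => ∀ i, m i ≤ k i), (-1 : ℝ) ^ (wt k - wt m) * f m

lemma mobius_inv {n : ℕ} (f : (Fin n → Bool) → ℝ) (m : Fin n → Bool) :
    ∑ k ∈ univ.filter (fun k => ∀ i, k i ≤ m i), mobius f k = f m := by
  unfold mobius
  calc ∑ k ∈ univ.filter (fun k => ∀ i, k i ≤ m i),
        ∑ l ∈ univ.filter (fun l => ∀ i, l i ≤ k i), (-1 : ℝ) ^ (wt k - wt l) * f l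
      = ∑ k ∈ univ, ∑ l ∈ univ,
          (if (∀ i, l i ≤ k i) ∧ (∀ i, k i ≤ m i) then (-1 : ℝ) ^ (wt k - wt l) * f l else 0) := by
        rw [Finset.sum_filter]
        refine Finset.sum_congr rfl fun k _ => ?_
        by_cases h : ∀ i, k i ≤ m i
        · rw [if_pos h, Finset.sum_filter]
          exact Finset.sum_congr rfl fun l _ => by simp [h]
        · rw [if_neg h]
          exact (Finset.sum_eq_zero fun l _ => by simp [h]).symm
    _ = ∑ l ∈ univ, ∑ k ∈ univ,
          (if (∀ i, l i ≤ k i) ∧ (∀ i, k i ≤ m i) then (-1 : ℝ) ^ (wt k - wt l) * f l else 0) :=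
        Finset.sum_comm
    _ = ∑ l ∈ univ, (if l = m then f l else 0) := by
        refine Finset.sum_congr rfl fun l _ => ?_
        rw [← Finset.sum_filter]
        have h1 : ∀ k ∈ univ.filter (fun k => (∀ i, l i ≤ k i) ∧ (∀ i, k i ≤ m i)),
            (-1 : ℝ) ^ (wt k - wt l) * f l = (-1 : ℝ) ^ (wt k) * ((-1 : ℝ) ^ (wt l) * f l) := by
          intro k hk
          simp only [mem_filter, mem_univ, true_and] at hk
          rw [sign_split (wt_le hk.1), mul_assoc]
        rw [Finset.sum_congr rfl h1, ← Finset.sum_mul, alt_sum l m]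
        by_cases h : l = m
        · subst h
          rw [if_pos rfl, if_pos rfl, ← mul_assoc, ← pow_add]
          rw [Even.neg_one_pow (Even.add_self _), one_mul]
        · rw [if_neg h, if_neg h, zero_mul]
    _ = f m := by rw [Finset.sum_ite_eq' univ m f]; simp

/-- Boolean matrix-vector product with AND as multiplication and OR as addition. -/
def bmul {b n : ℕ} (H : Fin b → Fin n → Bool) (k : Fin n → Bool) : Fin b → Bool :=
  fun i => decide (∃ j, H i j = true ∧ k j = true)

lemma condC {b n : ℕ} (H : Fin b → Fin n → Bool) (d : Fin n → Bool) (k : Fin n → Bool)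
    (ℓ : Fin b → Bool) :
    (∀ m, k m ≤ !((decide (∃ i, H i m = true ∧ ℓ i = false)) || d m)) ↔
    ((∀ i, k i ≤ !(d i)) ∧ (∀ i, bmul H k i ≤ ℓ i)) := by
  constructor
  · intro h
    refine ⟨fun m => ?_, fun i => ?_⟩
    · refine le_trans (h m) ?_
      rw [Bool.not_or]
      exact Bool.and_le_right _ _
    · cases hb : bmul H k i with
      | false => exact Bool.false_le _
      | true =>
        simp only [bmul, decide_eq_true_eq] at hb
        obtain ⟨m, hHm, hkm⟩ := hb
        cases hl : ℓ i with
        | true => exact Bool.le_true _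
        | false =>
          exfalso
          have h2 := h m
          rw [hkm] at h2
          have hdec : decide (∃ i', H i' m = true ∧ ℓ i' = false) = true :=
            decide_eq_true ⟨i, hHm, hl⟩
          rw [hdec, Bool.true_or] at h2
          exact absurd h2 (by decide)
  · rintro ⟨h1, h2⟩ m
    cases hk : k m with
    | false => exact Bool.false_le _
    | true =>
      have hd : d m = false := by
        have h3 := h1 m
        rw [hk] at h3
        cases hdm : d m
        · rfl
        · rw [hdm] at h3; exact absurd h3 (by decide)
      have hdec : decide (∃ i, H i m = true ∧ ℓ i = false) = false := by
        apply decide_eq_false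
        rintro ⟨i, hHi, hli⟩
        have hb : bmul H k i = true := decide_eq_true ⟨m, hHi, hk⟩
        have h4 := h2 i
        rw [hb, hli] at h4
        exact absurd h4 (by decide)
      rw [hdec, hd]
      exact Bool.le_true _

/-- Aliasing with delays: subsampling `u(ℓ) = f(¬(Hᵀ(¬ℓ) ∨ d))` gives a Möbius transform
`U(j) = ∑_{k ≤ ¬d, Hk = j} F(k)`. -/
theorem aliasing_with_delays (b n : ℕ) (H : Fin b → Fin n → Bool) (d : Fin n → Bool)
    (f : (Fin n → Bool) → ℝ) (F : (Fin n → Bool) → ℝ)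
    (hF : ∀ k, F k = mobius f k)
    (u : (Fin b → Bool) → ℝ)
    (hu : ∀ ℓ, u ℓ = f (fun j => !((decide (∃ i, H i j = true ∧ ℓ i = false)) || d j)))
    (U : (Fin b → Bool) → ℝ)
    (hU : ∀ j, U j = mobius u j) :
    ∀ j, U j = ∑ k ∈ univ.filter (fun k => bmul H k = j ∧ ∀ i, k i ≤ !(d i)), F k := by
  intro j
  rw [hU j]
  unfold mobius
  have step1 : ∀ ℓ : Fin b → Bool, u ℓ =
      ∑ k ∈ univ.filter (fun k => (∀ i, k i ≤ !(d i)) ∧ (∀ i, bmul H k i ≤ ℓ i)), F k := by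
    intro ℓ
    rw [hu ℓ, ← mobius_inv f (fun m => !((decide (∃ i, H i m = true ∧ ℓ i = false)) || d m))]
    have hset : univ.filter
        (fun k : Fin n → Bool => ∀ i, k i ≤ !((decide (∃ i', H i' i = true ∧ ℓ i' = false)) || d i))
        = univ.filter (fun k => (∀ i, k i ≤ !(d i)) ∧ (∀ i, bmul H k i ≤ ℓ i)) := by
      ext k
      simp only [mem_filter, mem_univ, true_and]
      exact condC H d k ℓ
    rw [hset]
    exact Finset.sum_congr rfl fun k _ => (hF k).symm
  calc ∑ ℓ ∈ univ.filter (fun ℓ => ∀ i, ℓ i ≤ j i), (-1 : ℝ) ^ (wt j - wt ℓ) * u ℓ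
      = ∑ ℓ ∈ univ, ∑ k ∈ univ,
          (if (∀ i, ℓ i ≤ j i) ∧ (∀ i, k i ≤ !(d i)) ∧ (∀ i, bmul H k i ≤ ℓ i)
            then (-1 : ℝ) ^ (wt j - wt ℓ) * F k else 0) := by
        rw [Finset.sum_filter]
        refine Finset.sum_congr rfl fun ℓ _ => ?_
        by_cases h : ∀ i, ℓ i ≤ j i
        · rw [if_pos h, step1 ℓ, Finset.mul_sum, Finset.sum_filter]
          refine Finset.sum_congr rfl fun k _ => ?_
          by_cases h2 : (∀ i, k i ≤ !(d i)) ∧ (∀ i, bmul H k i ≤ ℓ i)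
          · rw [if_pos h2, if_pos ⟨h, h2⟩]
          · rw [if_neg h2, if_neg (by tauto)]
        · rw [if_neg h]
          exact (Finset.sum_eq_zero fun k _ => by simp [h]).symm
    _ = ∑ k ∈ univ, ∑ ℓ ∈ univ,
          (if (∀ i, ℓ i ≤ j i) ∧ (∀ i, k i ≤ !(d i)) ∧ (∀ i, bmul H k i ≤ ℓ i)
            then (-1 : ℝ) ^ (wt j - wt ℓ) * F k else 0) := Finset.sum_comm
    _ = ∑ k ∈ univ, (if bmul H k = j ∧ ∀ i, k i ≤ !(d i) then F k else 0) := by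
        refine Finset.sum_congr rfl fun k _ => ?_
        by_cases hd : ∀ i, k i ≤ !(d i)
        · have hcond : ∀ ℓ : Fin b → Bool,
              ((∀ i, ℓ i ≤ j i) ∧ (∀ i, k i ≤ !(d i)) ∧ (∀ i, bmul H k i ≤ ℓ i)) ↔
              ((∀ i, bmul H k i ≤ ℓ i) ∧ (∀ i, ℓ i ≤ j i)) := fun ℓ => by tauto
          calc ∑ ℓ ∈ univ,
                (if (∀ i, ℓ i ≤ j i) ∧ (∀ i, k i ≤ !(d i)) ∧ (∀ i, bmul H k i ≤ ℓ i)
                  then (-1 : ℝ) ^ (wt j - wt ℓ) * F k else 0)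
              = ∑ ℓ ∈ univ.filter (fun ℓ => (∀ i, bmul H k i ≤ ℓ i) ∧ (∀ i, ℓ i ≤ j i)),
                  (-1 : ℝ) ^ (wt j - wt ℓ) * F k := by
                rw [Finset.sum_filter]
                exact Finset.sum_congr rfl fun ℓ _ => if_congr (hcond ℓ) rfl rfl
            _ = ∑ ℓ ∈ univ.filter (fun ℓ => (∀ i, bmul H k i ≤ ℓ i) ∧ (∀ i, ℓ i ≤ j i)),
                  (-1 : ℝ) ^ (wt ℓ) * ((-1 : ℝ) ^ (wt j) * F k) := by
                refine Finset.sum_congr rfl fun ℓ hℓ => ?_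
                simp only [mem_filter, mem_univ, true_and] at hℓ
                rw [sign_split (wt_le hℓ.2)]
                ring
            _ = (if bmul H k = j then (-1 : ℝ) ^ (wt (bmul H k)) else 0) *
                  ((-1 : ℝ) ^ (wt j) * F k) := by
                rw [← Finset.sum_mul, alt_sum (bmul H k) j]
            _ = (if bmul H k = j ∧ ∀ i, k i ≤ !(d i) then F k else 0) := by
                by_cases hb : bmul H k = j
                · rw [if_pos hb, if_pos ⟨hb, hd⟩, hb, ← mul_assoc, ← pow_add,
                    Even.neg_one_pow (Even.add_self _), one_mul]
                · rw [if_neg hb, if_neg (by tauto), zero_mul]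
        · rw [if_neg (by tauto)]
          exact Finset.sum_eq_zero fun ℓ _ => by
            rw [if_neg (by tauto)]
    _ = ∑ k ∈ univ.filter (fun k => bmul H k = j ∧ ∀ i, k i ≤ !(d i)), F k :=
        (Finset.sum_filter _ _).symm
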